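/- Let Q be a qualification domain with carrier D and let ℛ be a Q-valued similarity relation on S = Var ⊎ DC (i.e., a Q-valued proximity relation additionally satisfying transitivity: ℛ(x,z) ⊒ ℛ(x,y) ⊓ ℛ(y,z) for all x, y, z ∈ S) that is the identity on variables and satisfies ℛ(x,y) ≠ ⊥ only if x = y or x, y are data constructors of the same arity. Then the extension of ℛ to terms is also transitive: ℛ(t,r) ⊒ ℛ(t,s) ⊓ ℛ(s,r) for all terms t, s, r. -/

import Mathlib

/-- A qualification domain: a bounded lattice equipped with an attenuation operation. -/
structure QualificationDomain (D : Type*) [Lattice D] [BoundedOrder D] where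
  att : D → D → D
  att_assoc : ∀ d e f : D, att (att d e) f = att d (att e f)
  att_comm : ∀ d e : D, att d e = att e d
  att_mono : ∀ d d' e e' : D, d ≤ d' → e ≤ e' → att d e ≤ att d' e'
  att_top : ∀ d : D, att d ⊤ = d
  att_bot : ∀ d : D, att d ⊥ = ⊥
  att_le : ∀ d e : D, att d e ≤ e
  att_ne_bot : ∀ d e : D, d ≠ ⊥ → e ≠ ⊥ → att d e ≠ ⊥
  att_inf : ∀ d e₁ e₂ : D, att d (e₁ ⊓ e₂) = att d e₁ ⊓ att d e₂

/-- First-order terms over variables `V` and data constructors `CS`. -/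
inductive Trm (V : Type*) (CS : Type*) : Type _
  | var : V → Trm V CS
  | app : CS → List (Trm V CS) → Trm V CS

variable {V CS : Type*} {D : Type*} [Lattice D] [BoundedOrder D]

/-- The extension of a proximity relation on symbols to a proximity relation on terms:
`ext R (var X) (var X) = ⊤`, `ext R t s = ⊥` if exactly one of `t`, `s` is a variable or
they are applications of different arities, and
`ext R (c(t₁,…,tₙ)) (c'(s₁,…,sₙ)) = R c c' ⊓ ext R t₁ s₁ ⊓ ⋯ ⊓ ext R tₙ sₙ`. -/
def Trm.ext [DecidableEq V] (R : CS → CS → D) : Trm V CS → Trm V CS → D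
  | .var X, .var Y => if X = Y then (⊤ : D) else ⊥
  | .var _, .app _ _ => ⊥
  | .app _ _, .var _ => ⊥
  | .app c ts, .app c' ss =>
      if ts.length = ss.length then
        R c c' ⊓ ((ts.zip ss).attach.map (fun p => Trm.ext R p.1.1 p.1.2)).foldr (· ⊓ ·) ⊤
      else ⊥
termination_by t _ => sizeOf t
decreasing_by
  have h1 : p.1.1 ∈ ts := (List.of_mem_zip p.2).1
  have := List.sizeOf_lt_of_mem h1
  simp only [Trm.app.sizeOf_spec]
  omega

theorem List.foldr_inf_zipWith_le {α β γ L : Type*} [SemilatticeInf L] [OrderTop L]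
    {f : α → β → L} {g : β → γ → L} {h : α → γ → L} :
    ∀ {as : List α} {bs : List β} (cs : List γ), as.length ≤ bs.length →
      (∀ a ∈ as, ∀ b c, f a b ⊓ g b c ≤ h a c) →
      (List.zipWith f as bs).foldr (· ⊓ ·) ⊤ ⊓ (List.zipWith g bs cs).foldr (· ⊓ ·) ⊤ ≤
        (List.zipWith h as cs).foldr (· ⊓ ·) ⊤
  | [], _, _, _, _ => by simp
  | _ :: _, [], _, hlen, _ => by simp at hlen
  | _ :: _, _ :: _, [], _, _ => by simp
  | a :: as, b :: bs, c :: cs, hlen, hfgh => by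
    simp only [List.zipWith_cons_cons, List.foldr_cons]
    refine inf_inf_inf_comm .. |>.le.trans (inf_le_inf (hfgh a (by simp) b c) ?_)
    exact foldr_inf_zipWith_le cs (by simpa using hlen) fun a' ha' => hfgh a' (by simp [ha'])

namespace Trm

variable [DecidableEq V]

theorem ext_app (R : CS → CS → D) (c c' : CS) (ts ss : List (Trm V CS)) :
    ext R (app c ts) (app c' ss) =
      if ts.length = ss.length then R c c' ⊓ (List.zipWith (ext R) ts ss).foldr (· ⊓ ·) ⊤
      else ⊥ := by
  rw [ext, List.attach_map_val (l := ts.zip ss) (f := fun p => ext R p.1 p.2),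
    ← List.map_uncurry_zip_eq_zipWith]
  rfl

theorem ext_inf_ext_le {R : CS → CS → D} (h_trans : ∀ c c' c'', R c c' ⊓ R c' c'' ≤ R c c'') :
    ∀ t s r : Trm V CS, ext R t s ⊓ ext R s r ≤ ext R t r
  | var X, var Y, var Z => by
    simp only [ext]
    split_ifs <;> simp_all
  | app c ts, app c' ss, app c'' rs => by
    simp only [ext_app]
    split_ifs with hts hss htr
    · exact inf_inf_inf_comm .. |>.le.trans <| inf_le_inf (h_trans c c' c'') <|
        List.foldr_inf_zipWith_le rs hts.le fun t _ s r => ext_inf_ext_le h_trans t s r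
    · exact absurd (hts.trans hss) htr
    all_goals simp
  | var _, var _, app _ _ | var _, app _ _, _ | app _ _, var _, _ | app _ _, app _ _, var _ => by
    simp [ext]

end Trm

theorem extension_to_terms_of_similarity_is_transitive_general [DecidableEq V]
    (R : CS → CS → D)
    (h_trans : ∀ c c' c'', R c c' ⊓ R c' c'' ≤ R c c'') :
    ∀ t s r : Trm V CS, Trm.ext R t s ⊓ Trm.ext R s r ≤ Trm.ext R t r :=
  Trm.ext_inf_ext_le h_trans

/-- Let `Q` be a qualification domain with carrier `D` and `ℛ` a `Q`-valued
similarity relation (a proximity relation that is moreover transitive) on `Var ⊎ DC` that is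
the identity on variables and nonbottom between distinct symbols only for data constructors
of the same arity.  Then its extension to terms is also transitive:
`ℛ(t,r) ⊒ ℛ(t,s) ⊓ ℛ(s,r)` for all terms `t`, `s`, `r`. -/
theorem extension_to_terms_of_similarity_is_transitive [DecidableEq V]
    (Q : QualificationDomain D) (arC : CS → ℕ) (R : CS → CS → D)
    (h_refl : ∀ c, R c c = ⊤)
    (h_symm : ∀ c c', R c c' = R c' c)
    (h_arity : ∀ c c', R c c' ≠ ⊥ → arC c = arC c')
    (h_trans : ∀ c c' c'', R c c' ⊓ R c' c'' ≤ R c c'') :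
    ∀ t s r : Trm V CS, Trm.ext R t s ⊓ Trm.ext R s r ≤ Trm.ext R t r :=
  extension_to_terms_of_similarity_is_transitive_general R h_trans
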